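/- (Sufficient imaginary time for a target state error, nondegenerate case.) In the nondegenerate setup with 0 < p₀ < 1 and gap Δ > 0, let 0 < ε < sqrt(2 − 2·sqrt(p₀)). If β ≥ (1/(2Δ)) · log( ((1 − p₀)/p₀) / ((1 − ε²/2)^{−2} − 1) ), then ‖v(β)/‖v(β)‖ − w‖ ≤ ε. -/

import Mathlib

/-!
For unit vectors `‖u - w‖² = 2 - 2 Re⟪u, w⟫`, so it suffices that the overlap of `v(β)/‖v(β)‖`
with `w`, namely `|c_{k₀}| e^{-βE_{k₀}} / ‖v(β)‖`, is at least `s = 1 - ε²/2`. The gap gives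
`‖v(β)‖² ≤ e^{-2βE_{k₀}} (p₀ + (1 - p₀) e^{-2βΔ})` once `β ≥ 0`, and the lower bound on `β` is
exactly `(1 - p₀)/p₀ · e^{-2βΔ} ≤ s⁻² - 1`, which turns this into
`s ‖v(β)‖ ≤ |c_{k₀}| e^{-βE_{k₀}}`.
The upper bound on `ε` says `√p₀ < s`, so the logarithm in the bound on `β` is nonnegative and
`β ≥ 0` comes for free.
-/

/-- The unnormalized imaginary-time coordinate vector `v(β) ∈ ℂ^d`,
`v(β)_k = c_k·e^{−β·E_k}`, as an element of Euclidean space. -/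
noncomputable def iteVec {d : ℕ} (E : Fin d → ℝ) (c : Fin d → ℂ) (β : ℝ) :
    EuclideanSpace ℂ (Fin d) :=
  (WithLp.equiv 2 (Fin d → ℂ)).symm fun k => c k * Real.exp (-(β * E k))

open Classical in
/-- The phase-matched ground eigenstate `w ∈ ℂ^d`, with `w_{k₀} = c_{k₀}/|c_{k₀}|` and
`w_k = 0` for `k ≠ k₀`. -/
noncomputable def groundPhaseVec {d : ℕ} (c : Fin d → ℂ) (k₀ : Fin d) :
    EuclideanSpace ℂ (Fin d) :=
  (WithLp.equiv 2 (Fin d → ℂ)).symm fun k => if k = k₀ then c k₀ / (‖c k₀‖ : ℂ) else 0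

open scoped InnerProductSpace

section NormalizedOverlap

variable {𝕜 F : Type*} [RCLike 𝕜] [NormedAddCommGroup F] [InnerProductSpace 𝕜 F]

theorem norm_sub_le_of_one_sub_sq_div_two_le_re_inner {u w : F} {ε : ℝ}
    (hu : ‖u‖ = 1) (hw : ‖w‖ = 1) (hε : 0 ≤ ε)
    (h : 1 - ε ^ 2 / 2 ≤ RCLike.re ⟪u, w⟫_𝕜) : ‖u - w‖ ≤ ε := by
  refine (pow_le_pow_iff_left₀ (norm_nonneg _) hε two_ne_zero).mp ?_
  rw [@norm_sub_sq 𝕜, hu, hw]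
  linarith

theorem norm_inv_smul_sub_le_of_mul_norm_le_re_inner [NormedSpace ℝ F] [IsScalarTower ℝ 𝕜 F]
    {v w : F} {ε : ℝ}
    (hv : v ≠ 0) (hw : ‖w‖ = 1) (hε : 0 ≤ ε)
    (h : (1 - ε ^ 2 / 2) * ‖v‖ ≤ RCLike.re ⟪v, w⟫_𝕜) : ‖‖v‖⁻¹ • v - w‖ ≤ ε := by
  have hv' : 0 < ‖v‖ := norm_pos_iff.mpr hv
  refine norm_sub_le_of_one_sub_sq_div_two_le_re_inner (𝕜 := 𝕜) ?_ hw hε ?_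
  · rw [norm_smul, norm_inv, norm_norm, inv_mul_cancel₀ hv'.ne']
  · rw [RCLike.real_smul_eq_coe_smul (K := 𝕜), inner_smul_left, RCLike.conj_ofReal,
      RCLike.re_ofReal_mul, le_inv_mul_iff₀ hv', mul_comm]
    exact h

end NormalizedOverlap

theorem Real.mul_exp_neg_le_of_inv_mul_log_div_le {r t a β : ℝ} (hr : 0 < r) (ht : 0 < t)
    (ha : 0 < a) (h : 1 / a * Real.log (r / t) ≤ β) : r * Real.exp (-(a * β)) ≤ t := by
  rw [one_div, inv_mul_le_iff₀ ha, Real.log_le_iff_le_exp (by positivity), div_le_iff₀ ht] at h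
  rw [Real.exp_neg, ← div_eq_mul_inv, div_le_iff₀ (Real.exp_pos _)]
  linarith

theorem Real.inv_sq_sub_one_le_div_of_sqrt_le {p s : ℝ} (hp : 0 < p) (hs : √p ≤ s) :
    s⁻¹ ^ 2 - 1 ≤ (1 - p) / p := by
  have hps : p ≤ s ^ 2 := (Real.sqrt_le_iff.mp hs).2
  have : s⁻¹ ^ 2 * p ≤ 1 := by
    rwa [inv_pow, inv_mul_le_iff₀ (hp.trans_le hps), mul_one]
  rw [le_div_iff₀ hp]
  linarith

section ImaginaryTime

variable {d : ℕ} (E : Fin d → ℝ) (c : Fin d → ℂ) (k₀ : Fin d) (β : ℝ)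

theorem norm_iteVec_sq :
    ‖iteVec E c β‖ ^ 2 = ∑ k, ‖c k‖ ^ 2 * Real.exp (-(β * E k)) ^ 2 := by
  rw [EuclideanSpace.norm_sq_eq]
  refine Finset.sum_congr rfl fun k _ => ?_
  simp only [iteVec, WithLp.equiv_symm_apply, norm_mul, Complex.norm_real, Real.norm_eq_abs,
    abs_of_pos (Real.exp_pos _), mul_pow]

theorem inner_iteVec_groundPhaseVec :
    ⟪iteVec E c β, groundPhaseVec c k₀⟫_ℂ = ((‖c k₀‖ * Real.exp (-(β * E k₀)) : ℝ) : ℂ) := by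
  rw [PiLp.inner_apply, Finset.sum_eq_single_of_mem k₀ (Finset.mem_univ _) fun k _ hk => by
    simp [groundPhaseVec, hk]]
  simp only [iteVec, groundPhaseVec, WithLp.equiv_symm_apply, if_pos, RCLike.inner_apply]
  rcases eq_or_ne (c k₀) 0 with hc | hc
  · simp [hc]
  rw [map_mul, Complex.conj_ofReal, div_mul_eq_mul_div, div_eq_iff (by simpa using hc),
    Complex.ofReal_mul]
  linear_combination (Real.exp (-(β * E k₀)) : ℂ) * Complex.mul_conj' (c k₀)

theorem norm_groundPhaseVec {c : Fin d → ℂ} {k₀ : Fin d} (hc : c k₀ ≠ 0) :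
    ‖groundPhaseVec c k₀‖ = 1 := by
  rw [EuclideanSpace.norm_eq, Finset.sum_eq_single_of_mem k₀ (Finset.mem_univ _) fun k _ hk => by
    simp [groundPhaseVec, hk]]
  simp [groundPhaseVec, hc]

variable {E c k₀ β}

theorem norm_iteVec_sq_le_of_gap {Δ : ℝ} (hβ : 0 ≤ β) (hgap : ∀ k, k ≠ k₀ → E k₀ + Δ ≤ E k)
    (hnorm : ∑ k, ‖c k‖ ^ 2 = 1) :
    ‖iteVec E c β‖ ^ 2 ≤ Real.exp (-(β * E k₀)) ^ 2 *
      (‖c k₀‖ ^ 2 + (1 - ‖c k₀‖ ^ 2) * Real.exp (-(2 * Δ * β))) := by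
  have hrest : ∑ k ∈ Finset.univ.erase k₀, ‖c k‖ ^ 2 = 1 - ‖c k₀‖ ^ 2 := by
    rw [← hnorm, ← Finset.add_sum_erase _ _ (Finset.mem_univ k₀), add_sub_cancel_left]
  have hdecay : ∀ k ∈ Finset.univ.erase k₀,
      Real.exp (-(β * E k)) ^ 2 ≤ Real.exp (-(β * E k₀)) ^ 2 * Real.exp (-(2 * Δ * β)) := by
    intro k hk
    have := mul_le_mul_of_nonneg_left (hgap k (Finset.ne_of_mem_erase hk)) hβ
    rw [← Real.exp_nat_mul, ← Real.exp_nat_mul, ← Real.exp_add, Real.exp_le_exp]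
    push_cast
    linarith
  rw [norm_iteVec_sq, ← Finset.add_sum_erase _ _ (Finset.mem_univ k₀)]
  calc _ ≤ ‖c k₀‖ ^ 2 * Real.exp (-(β * E k₀)) ^ 2 + ∑ k ∈ Finset.univ.erase k₀,
        ‖c k‖ ^ 2 * (Real.exp (-(β * E k₀)) ^ 2 * Real.exp (-(2 * Δ * β))) := by
        gcongr with k hk
        exact hdecay k hk
    _ = _ := by rw [← Finset.sum_mul, hrest]; ring

theorem mul_norm_iteVec_le_of_decay {Δ s : ℝ} (hβ : 0 ≤ β)
    (hgap : ∀ k, k ≠ k₀ → E k₀ + Δ ≤ E k) (hnorm : ∑ k, ‖c k‖ ^ 2 = 1)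
    (hp₀ : 0 < ‖c k₀‖ ^ 2) (hs : 0 < s)
    (hdecay : (1 - ‖c k₀‖ ^ 2) / ‖c k₀‖ ^ 2 * Real.exp (-(2 * Δ * β)) ≤ s⁻¹ ^ 2 - 1) :
    s * ‖iteVec E c β‖ ≤ ‖c k₀‖ * Real.exp (-(β * E k₀)) := by
  rw [div_mul_eq_mul_div, div_le_iff₀ hp₀] at hdecay
  refine (pow_le_pow_iff_left₀ (by positivity) (by positivity) two_ne_zero).mp ?_
  calc (s * ‖iteVec E c β‖) ^ 2 = s ^ 2 * ‖iteVec E c β‖ ^ 2 := mul_pow _ _ _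
    _ ≤ s ^ 2 * (Real.exp (-(β * E k₀)) ^ 2 *
          (‖c k₀‖ ^ 2 + (1 - ‖c k₀‖ ^ 2) * Real.exp (-(2 * Δ * β)))) := by
        gcongr
        exact norm_iteVec_sq_le_of_gap hβ hgap hnorm
    _ ≤ s ^ 2 * (Real.exp (-(β * E k₀)) ^ 2 * (s⁻¹ ^ 2 * ‖c k₀‖ ^ 2)) := by
        gcongr
        linarith
    _ = (‖c k₀‖ * Real.exp (-(β * E k₀))) ^ 2 := by field_simp

end ImaginaryTime

theorem sufficient_beta_for_state_error_general {d : ℕ}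
    (E : Fin d → ℝ) (k₀ : Fin d)
    (Δ : ℝ) (hΔ : IsLeast ((fun k => E k - E k₀) '' {k | k ≠ k₀}) Δ) (hΔpos : 0 < Δ)
    (c : Fin d → ℂ) (hnorm : ∑ k, ‖c k‖ ^ 2 = 1)
    (hp₀ : 0 < ‖c k₀‖ ^ 2)
    (ε : ℝ) (hε : 0 < ε) (hεlt : ε < Real.sqrt (2 - 2 * Real.sqrt (‖c k₀‖ ^ 2)))
    (β : ℝ)
    (hβ : (1 / (2 * Δ)) *
        Real.log (((1 - ‖c k₀‖ ^ 2) / ‖c k₀‖ ^ 2) /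
          ((1 - ε ^ 2 / 2)⁻¹ ^ 2 - 1)) ≤ β) :
    ‖‖iteVec E c β‖⁻¹ • iteVec E c β - groundPhaseVec c k₀‖ ≤ ε := by
  have hc₀ : c k₀ ≠ 0 := by simpa using hp₀.ne'
  have hs : √(‖c k₀‖ ^ 2) < 1 - ε ^ 2 / 2 := by
    have := (Real.lt_sqrt hε.le).mp hεlt
    linarith
  have hs₀ : 0 < 1 - ε ^ 2 / 2 := (Real.sqrt_pos.mpr hp₀).trans hs
  have ht : 0 < (1 - ε ^ 2 / 2)⁻¹ ^ 2 - 1 := by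
    refine sub_pos.mpr (one_lt_pow₀ ((one_lt_inv₀ hs₀).mpr ?_) two_ne_zero)
    linarith [pow_pos hε 2]
  have htr := Real.inv_sq_sub_one_le_div_of_sqrt_le hp₀ hs.le
  have hβ₀ : 0 ≤ β :=
    hβ.trans' (mul_nonneg (by positivity) (Real.log_nonneg ((one_le_div ht).mpr htr)))
  have hgap : ∀ k, k ≠ k₀ → E k₀ + Δ ≤ E k := fun k hk => by linarith [hΔ.2 ⟨k, hk, rfl⟩]
  have hdecay := Real.mul_exp_neg_le_of_inv_mul_log_div_le (ht.trans_le htr) ht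
    (by linarith : 0 < 2 * Δ) hβ
  have hinner := inner_iteVec_groundPhaseVec E c k₀ β
  refine norm_inv_smul_sub_le_of_mul_norm_le_re_inner (𝕜 := ℂ) ?_
    (norm_groundPhaseVec hc₀) hε.le ?_
  · rintro hv
    rw [hv, inner_zero_left, eq_comm, Complex.ofReal_eq_zero] at hinner
    exact (by positivity : 0 < ‖c k₀‖ * Real.exp (-(β * E k₀))).ne' hinner
  · rw [hinner, RCLike.re_to_complex, Complex.ofReal_re]
    exact mul_norm_iteVec_le_of_decay hβ₀ hgap hnorm hp₀ hs₀ hdecay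

/-- Sufficient imaginary time for a target state error, nondegenerate case:
in the nondegenerate setup with `0 < p₀ < 1` (`p₀ = |c_{k₀}|²`), gap
`Δ = min_{k ≠ k₀}(E_k − E_{k₀}) > 0`, and `0 < ε < √(2 − 2·√p₀)`: if
`β ≥ (1/(2Δ))·log(((1 − p₀)/p₀) / ((1 − ε²/2)^{−2} − 1))`, then
`‖v(β)/‖v(β)‖ − w‖ ≤ ε`. -/
theorem sufficient_beta_for_state_error {d : ℕ} (hd : 2 ≤ d)
    (E : Fin d → ℝ) (k₀ : Fin d) (hground : ∀ k, k ≠ k₀ → E k₀ < E k)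
    (Δ : ℝ) (hΔ : IsLeast ((fun k => E k - E k₀) '' {k | k ≠ k₀}) Δ) (hΔpos : 0 < Δ)
    (c : Fin d → ℂ) (hnorm : ∑ k, ‖c k‖ ^ 2 = 1)
    (hp₀ : 0 < ‖c k₀‖ ^ 2) (hp₀lt : ‖c k₀‖ ^ 2 < 1)
    (ε : ℝ) (hε : 0 < ε) (hεlt : ε < Real.sqrt (2 - 2 * Real.sqrt (‖c k₀‖ ^ 2)))
    (β : ℝ)
    (hβ : (1 / (2 * Δ)) *
        Real.log (((1 - ‖c k₀‖ ^ 2) / ‖c k₀‖ ^ 2) /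
          ((1 - ε ^ 2 / 2)⁻¹ ^ 2 - 1)) ≤ β) :
    ‖‖iteVec E c β‖⁻¹ • iteVec E c β - groundPhaseVec c k₀‖ ≤ ε :=
  sufficient_beta_for_state_error_general E k₀ Δ hΔ hΔpos c hnorm hp₀ ε hε hεlt β hβ
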